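/- For every real x with |x| < 1, (∑_{n=0}^∞ ((7/24)_n (11/24)_n)/((5/4)_n n!) x^n)² = ∑_{n=0}^∞ ((7/12)_n (3/4)_n (11/12)_n)/((3/2)_n (5/4)_n n!) x^n; that is, ₂F₁(7/24, 11/24; 5/4; x)² = ₃F₂(7/12, 3/4, 11/12; 3/2, 5/4; x). -/
import Mathlib

open scoped BigOperators
open Real

/-- The ascending Pochhammer factorial `(a)_n = a (a+1) ⋯ (a+n-1)`. -/
noncomputable def poch (a : ℝ) (n : ℕ) : ℝ := ∏ i ∈ Finset.range n, (a + i)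

lemma poch_zero (a : ℝ) : poch a 0 = 1 := by simp [poch]

lemma poch_succ (a : ℝ) (n : ℕ) : poch a (n + 1) = poch a n * (a + n) := by
  simp [poch, Finset.prod_range_succ]

lemma poch_pos {a : ℝ} (ha : 0 < a) (n : ℕ) : 0 < poch a n := by
  apply Finset.prod_pos
  intro i _
  positivity

/-- The ₂F₁ coefficient. -/
noncomputable def cc (k : ℕ) : ℝ :=
  poch (7 / 24) k * poch (11 / 24) k / (poch (5 / 4) k * (k.factorial : ℝ))

/-- The ₃F₂ coefficient. -/
noncomputable def dd (n : ℕ) : ℝ :=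
  poch (7 / 12) n * poch (3 / 4) n * poch (11 / 12) n /
    (poch (3 / 2) n * poch (5 / 4) n * (n.factorial : ℝ))

lemma cc_pos (k : ℕ) : 0 < cc k := by
  unfold cc
  have h1 := poch_pos (by norm_num : (0:ℝ) < 7/24) k
  have h2 := poch_pos (by norm_num : (0:ℝ) < 11/24) k
  have h3 := poch_pos (by norm_num : (0:ℝ) < 5/4) k
  have h4 : (0:ℝ) < k.factorial := by exact_mod_cast k.factorial_pos
  positivity

lemma cc_zero : cc 0 = 1 := by simp [cc, poch_zero]

lemma dd_zero : dd 0 = 1 := by simp [dd, poch_zero]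

lemma cc_succ (k : ℕ) :
    cc (k + 1) = cc k * ((7/24 + k) * (11/24 + k) / ((5/4 + k) * (k + 1))) := by
  have h3 := (poch_pos (by norm_num : (0:ℝ) < 5/4) k).ne'
  have h4 : ((k.factorial : ℝ)) ≠ 0 := by exact_mod_cast k.factorial_pos.ne'
  have h5 : (5/4 : ℝ) + k ≠ 0 := by positivity
  have h6 : (k : ℝ) + 1 ≠ 0 := by positivity
  unfold cc
  rw [poch_succ, poch_succ, poch_succ, Nat.factorial_succ]
  push_cast
  field_simp

/-- The ratio `dd (n+1) / dd n`. -/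
noncomputable def rho (n : ℝ) : ℝ :=
  (7/12 + n) * (3/4 + n) * (11/12 + n) / ((3/2 + n) * (5/4 + n) * (1 + n))

lemma dd_succ (n : ℕ) : dd (n + 1) = rho n * dd n := by
  have h1 := (poch_pos (by norm_num : (0:ℝ) < 3/2) n).ne'
  have h2 := (poch_pos (by norm_num : (0:ℝ) < 5/4) n).ne'
  have h4 : ((n.factorial : ℝ)) ≠ 0 := by exact_mod_cast n.factorial_pos.ne'
  have h5 : (3/2 : ℝ) + n ≠ 0 := by positivity
  have h6 : (5/4 : ℝ) + n ≠ 0 := by positivity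
  have h7 : (1 : ℝ) + n ≠ 0 := by positivity
  unfold dd rho
  rw [poch_succ, poch_succ, poch_succ, poch_succ, poch_succ, Nat.factorial_succ]
  push_cast
  field_simp
  ring

/-- The Zeilberger certificate for Clausen's formula. -/
noncomputable def R2 (n k : ℝ) : ℝ :=
  (2 * k ^ 3 - 3 * (n + 1) * k ^ 2 - ((6 * n + 7) / 8) * k) /
    ((n + 1) * (3/2 + n) * (5/4 + n))

lemma R2_zero (n : ℝ) : R2 n 0 = 0 := by simp [R2]

lemma R2_top (n : ℝ) (hn : 0 ≤ n) : R2 n (n + 1) = -1 := by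
  have h5 : (3/2 : ℝ) + n ≠ 0 := by positivity
  have h6 : (5/4 : ℝ) + n ≠ 0 := by positivity
  have h7 : (n : ℝ) + 1 ≠ 0 := by positivity
  unfold R2
  field_simp
  ring

/-- The key rational-function identity (Zeilberger certificate verification). -/
lemma cert (k m : ℝ) (hk : 0 ≤ k) (hm : 0 ≤ m) :
    (7/24 + m) * (11/24 + m) / ((5/4 + m) * (m + 1)) - rho (k + m)
      = R2 (k + m) (k + 1) * ((7/24 + k) * (11/24 + k) / ((5/4 + k) * (k + 1)))
        - R2 (k + m) k * ((7/24 + m) * (11/24 + m) / ((5/4 + m) * (m + 1))) := by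
  have h1 : (5/4 : ℝ) + m ≠ 0 := by positivity
  have h2 : (m : ℝ) + 1 ≠ 0 := by positivity
  have h3 : (5/4 : ℝ) + k ≠ 0 := by positivity
  have h4 : (k : ℝ) + 1 ≠ 0 := by positivity
  have h5 : (3/2 : ℝ) + (k + m) ≠ 0 := by positivity
  have h6 : (5/4 : ℝ) + (k + m) ≠ 0 := by positivity
  have h7 : (1 : ℝ) + (k + m) ≠ 0 := by positivity
  have h8 : (k + m : ℝ) + 1 ≠ 0 := by positivity
  unfold rho R2
  field_simp
  ring

/-- Per-term telescoping identity. -/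
lemma step (n k : ℕ) (hk : k ≤ n) :
    cc k * cc (n + 1 - k) - rho n * (cc k * cc (n - k))
      = R2 n ((k : ℝ) + 1) * cc (k + 1) * cc (n - k)
        - R2 n k * cc k * cc (n + 1 - k) := by
  obtain ⟨m, rfl⟩ := Nat.exists_eq_add_of_le hk
  have e1 : k + m + 1 - k = m + 1 := by omega
  have e2 : k + m - k = m := by omega
  rw [e1, e2, cc_succ m, cc_succ k]
  have hcast : ((k + m : ℕ) : ℝ) = (k : ℝ) + (m : ℝ) := by push_cast; ring
  rw [hcast]
  have hcert := cert (k : ℝ) (m : ℝ) (Nat.cast_nonneg k) (Nat.cast_nonneg m)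
  linear_combination (cc k * cc m) * hcert

/-- The Cauchy-product coefficient. -/
noncomputable def T (n : ℕ) : ℝ := ∑ k ∈ Finset.range (n + 1), cc k * cc (n - k)

lemma T_succ (n : ℕ) : T (n + 1) = rho n * T n := by
  set g : ℕ → ℝ := fun k => R2 (n : ℝ) (k : ℝ) * cc k * cc (n + 1 - k) with hgdef
  have key : ∑ k ∈ Finset.range (n + 1),
      (cc k * cc (n + 1 - k) - rho n * (cc k * cc (n - k)))
      = ∑ k ∈ Finset.range (n + 1), (g (k + 1) - g k) := by
    apply Finset.sum_congr rfl
    intro k hkmem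
    have hk : k ≤ n := Nat.lt_succ_iff.mp (Finset.mem_range.mp hkmem)
    have e3 : n + 1 - (k + 1) = n - k := by omega
    have := step n k hk
    simp only [hgdef, e3]
    push_cast
    push_cast at this
    linarith [this]
  rw [Finset.sum_sub_distrib, ← Finset.mul_sum] at key
  rw [Finset.sum_range_sub g] at key
  have htop : R2 (n : ℝ) ((n : ℝ) + 1) = -1 := R2_top n (Nat.cast_nonneg n)
  have e4 : n + 1 - (n + 1) = 0 := by omega
  have hgtop : g (n + 1) = -cc (n + 1) := by
    simp only [hgdef, e4, cc_zero]
    push_cast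
    rw [htop]; ring
  have hg0 : g 0 = 0 := by
    simp [hgdef, R2_zero]
  rw [hgtop, hg0, sub_zero] at key
  have hT1 : T (n + 1) = (∑ k ∈ Finset.range (n + 1), cc k * cc (n + 1 - k)) + cc (n + 1) := by
    unfold T
    rw [Finset.sum_range_succ]
    simp [cc_zero]
  rw [show (∑ i ∈ Finset.range (n + 1), cc i * cc (n - i)) = T n from rfl] at key
  rw [hT1]
  linarith [key]

lemma T_eq_dd (n : ℕ) : T n = dd n := by
  induction n with
  | zero => simp [T, dd_zero, cc_zero]
  | succ n ih => rw [T_succ, dd_succ, ih]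

lemma cc_ratio_le (k : ℕ) : cc (k + 1) ≤ cc k := by
  rw [cc_succ]
  have hc := cc_pos k
  have h1 : (7/24 : ℝ) + k ≤ 5/4 + k := by linarith
  have h2 : (11/24 : ℝ) + k ≤ (k : ℝ) + 1 := by linarith
  have h3 : (0:ℝ) < 5/4 + k := by positivity
  have h4 : (0:ℝ) < (k : ℝ) + 1 := by positivity
  have h5 : (7/24 : ℝ) + k > 0 := by positivity
  have h6 : (11/24 : ℝ) + k > 0 := by positivity
  have : (7/24 + (k:ℝ)) * (11/24 + k) ≤ (5/4 + k) * (k + 1) := by nlinarith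
  have hratio : (7/24 + (k:ℝ)) * (11/24 + k) / ((5/4 + k) * (k + 1)) ≤ 1 := by
    rw [div_le_one (by positivity)]
    exact this
  nlinarith [mul_le_of_le_one_right hc.le hratio]

lemma summable_cc (x : ℝ) (hx : |x| < 1) : Summable fun n => ‖cc n * x ^ n‖ := by
  apply summable_of_ratio_norm_eventually_le (r := (1 + |x|) / 2)
  · linarith
  · filter_upwards [] with n
    have hc := cc_pos n
    have hc1 := cc_pos (n + 1)
    have hratio := cc_ratio_le n
    have h1 : ‖‖cc (n + 1) * x ^ (n + 1)‖‖ = cc (n + 1) * |x| ^ (n + 1) := by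
      rw [norm_norm, norm_mul, norm_pow, Real.norm_eq_abs, Real.norm_eq_abs,
        abs_of_pos hc1]
    have h2 : ‖‖cc n * x ^ n‖‖ = cc n * |x| ^ n := by
      rw [norm_norm, norm_mul, norm_pow, Real.norm_eq_abs, Real.norm_eq_abs,
        abs_of_pos hc]
    rw [h1, h2]
    have hxabs : (0:ℝ) ≤ |x| := abs_nonneg x
    have : cc (n + 1) * |x| ^ (n + 1) ≤ |x| * (cc n * |x| ^ n) := by
      rw [pow_succ]
      nlinarith [pow_nonneg hxabs n, mul_le_mul_of_nonneg_right hratio (pow_nonneg hxabs n)]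
    have hle : |x| ≤ (1 + |x|) / 2 := by linarith
    calc cc (n + 1) * |x| ^ (n + 1) ≤ |x| * (cc n * |x| ^ n) := this
      _ ≤ (1 + |x|) / 2 * (cc n * |x| ^ n) := by
          apply mul_le_mul_of_nonneg_right hle
          positivity

theorem stmt17 (x : ℝ) (hx : |x| < 1) :
    (∑' n : ℕ, poch (7 / 24) n * poch (11 / 24) n / (poch (5 / 4) n * (n.factorial : ℝ)) *
        (x) ^ n) ^ 2
      = ∑' n : ℕ, poch (7 / 12) n * poch (3 / 4) n * poch (11 / 12) n /
          (poch (3 / 2) n * poch (5 / 4) n * (n.factorial : ℝ)) * (x) ^ n := by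
  have hsum := summable_cc x hx
  have hcauchy := tsum_mul_tsum_eq_tsum_sum_antidiagonal_of_summable_norm hsum hsum
  have hL : (∑' n : ℕ, poch (7 / 24) n * poch (11 / 24) n / (poch (5 / 4) n * (n.factorial : ℝ)) *
      (x) ^ n) = ∑' n : ℕ, cc n * x ^ n := by
    apply tsum_congr; intro n; rfl
  rw [hL, sq, hcauchy]
  apply tsum_congr
  intro n
  rw [Finset.Nat.sum_antidiagonal_eq_sum_range_succ_mk]
  have hterm : ∀ k ∈ Finset.range (n + 1),
      cc k * x ^ k * (cc (n - k) * x ^ (n - k)) = cc k * cc (n - k) * x ^ n := by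
    intro k hkmem
    have hk : k ≤ n := Nat.lt_succ_iff.mp (Finset.mem_range.mp hkmem)
    have : x ^ k * x ^ (n - k) = x ^ n := by
      rw [← pow_add]
      congr 1
      omega
    calc cc k * x ^ k * (cc (n - k) * x ^ (n - k))
        = cc k * cc (n - k) * (x ^ k * x ^ (n - k)) := by ring
      _ = cc k * cc (n - k) * x ^ n := by rw [this]
  rw [Finset.sum_congr rfl hterm, ← Finset.sum_mul]
  have : (∑ k ∈ Finset.range (n + 1), cc k * cc (n - k)) = dd n := T_eq_dd n
  rw [this]
  rfl
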